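/- Under the hypotheses above, for any vector X with P_i(X) ≠ 0, the vector W := P_i(X)/√((I − 3α_i²)·⟨P_i(X), X⟩) is a unit eigenvector of C for the eigenvalue α_i (for a suitable branch of the square root), i.e., C W = α_i W and ⟨W, W⟩ = 1. -/
import Mathlib

open Matrix

lemma sum_mulVec' (A : Fin 3 → Matrix (Fin 3) (Fin 3) ℂ) (v : Fin 3 → ℂ) :
    (∑ m, A m).mulVec v = ∑ m, (A m).mulVec v := by
  ext a
  simp only [mulVec, dotProduct, Matrix.sum_apply, Finset.sum_apply, Finset.sum_mul]
  exact Finset.sum_comm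

lemma vv_mulVec (u v x : Fin 3 → ℂ) :
    (vecMulVec u v).mulVec x = (v ⬝ᵥ x) • u := by
  ext a
  simp [mulVec, vecMulVec, dotProduct, Finset.mul_sum, Finset.sum_mul, mul_comm, mul_assoc,
    mul_left_comm]

lemma vv_trace (u v : Fin 3 → ℂ) : (vecMulVec u v).trace = u ⬝ᵥ v := by
  simp [Matrix.trace, Matrix.diag, vecMulVec, dotProduct]

lemma vv_mul (u v u' v' : Fin 3 → ℂ) :
    vecMulVec u v * vecMulVec u' v' = (v ⬝ᵥ u') • vecMulVec u v' := by
  ext a b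
  simp [mul_apply, vecMulVec, dotProduct, Finset.sum_mul, Finset.mul_sum]
  ring_nf
  apply Finset.sum_congr rfl
  intros; ring

/-- with `C` as in Statement 5, for any `X` with `P_i(X) ≠ 0` and any nonzero
square root `s` of `(I − 3α_i²)·⟨P_i(X), X⟩`, the vector `W = P_i(X)/s` is a unit (up to
sign) eigenvector of `C` for the eigenvalue `α_i`. -/
theorem eigenvector_from_projector (C : Matrix (Fin 3) (Fin 3) ℂ) (α : Fin 3 → ℂ)
    (W : Fin 3 → Fin 3 → ℂ)
    (hsym : Cᵀ = C) (htr : C.trace = 0)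
    (horth : ∀ a b, W a ⬝ᵥ W b = if a = b then 1 else 0)
    (hspec : C = ∑ m, α m • Matrix.vecMulVec (W m) (W m))
    (hdist : Function.Injective α) (i : Fin 3)
    (X : Fin 3 → ℂ) (s : ℂ)
    (P : Matrix (Fin 3) (Fin 3) ℂ)
    (hP : P = C ^ 2 + α i • C + (α i ^ 2 - (C ^ 2).trace / 2) • 1)
    (hPX : P.mulVec X ≠ 0)
    (hs : s ^ 2 = ((C ^ 2).trace / 2 - 3 * α i ^ 2) * (P.mulVec X ⬝ᵥ X))
    (hs0 : s ≠ 0) :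
    C.mulVec (s⁻¹ • P.mulVec X) = α i • (s⁻¹ • P.mulVec X) ∧
    ((s⁻¹ • P.mulVec X) ⬝ᵥ (s⁻¹ • P.mulVec X) = 1 ∨
     (s⁻¹ • P.mulVec X) ⬝ᵥ (s⁻¹ • P.mulVec X) = -1) := by
  have hCW : ∀ n, C.mulVec (W n) = α n • W n := by
    intro n
    rw [hspec, sum_mulVec']
    simp [Matrix.smul_mulVec, vv_mulVec, horth, ite_smul, Finset.sum_ite_eq,
      Finset.sum_ite_eq']
  have hC2 : C ^ 2 = ∑ m, (α m ^ 2) • vecMulVec (W m) (W m) := by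
    conv_lhs => rw [sq, hspec]
    rw [Finset.sum_mul_sum]
    apply Finset.sum_congr rfl
    intro m _
    rw [Finset.sum_congr rfl (fun n _ => by
      rw [smul_mul_smul_comm, vv_mul, horth] : ∀ n ∈ Finset.univ,
        (α m • vecMulVec (W m) (W m)) * (α n • vecMulVec (W n) (W n)) =
          (α m * α n) • ((if m = n then (1 : ℂ) else 0) • vecMulVec (W m) (W n)))]
    simp [smul_ite, ite_smul, Finset.sum_ite_eq, Finset.sum_ite_eq', smul_smul, sq]
  have hT : (C ^ 2).trace = α 0 ^ 2 + α 1 ^ 2 + α 2 ^ 2 := by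
    rw [hC2, Matrix.trace_sum]
    simp [Matrix.trace_smul, vv_trace, horth, Fin.sum_univ_three, sq]
  have hS : α 0 + α 1 + α 2 = 0 := by
    have h := htr
    rw [hspec, Matrix.trace_sum] at h
    simpa [Matrix.trace_smul, vv_trace, horth, Fin.sum_univ_three] using h
  have hone : (1 : Matrix (Fin 3) (Fin 3) ℂ) = ∑ m, vecMulVec (W m) (W m) := by
    have h1 : (Matrix.of W) * (Matrix.of W)ᵀ = 1 := by
      ext a b
      simpa [mul_apply, dotProduct, Matrix.one_apply] using horth a b
    have h2 : (Matrix.of W)ᵀ * (Matrix.of W) = 1 := mul_eq_one_comm.mp h1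
    ext a b
    have h3 := congrFun (congrFun h2 a) b
    simp only [mul_apply, transpose_apply, Matrix.of_apply] at h3
    simp only [Matrix.sum_apply, vecMulVec_apply]
    rw [← h3]
  set T := (C ^ 2).trace with hTdef
  set c := W i ⬝ᵥ X with hc
  have key : P.mulVec X = ((3 * α i ^ 2 - T / 2) * c) • W i := by
    have hP' : P = ∑ m, (α m ^ 2 + α i * α m + (α i ^ 2 - T / 2)) • vecMulVec (W m) (W m) := by
      rw [hP, hC2]
      nth_rewrite 1 [hspec]
      rw [hone, Finset.smul_sum, Finset.smul_sum, ← Finset.sum_add_distrib,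
        ← Finset.sum_add_distrib]
      apply Finset.sum_congr rfl
      intro m _
      rw [smul_smul, ← add_smul, ← add_smul]
    rw [hP', sum_mulVec']
    simp only [Matrix.smul_mulVec, vv_mulVec]
    rw [Finset.sum_eq_single i]
    · rw [smul_smul, ← hc]
      congr 1
      ring
    · intro m _ hmi
      have hβ : α m ^ 2 + α i * α m + (α i ^ 2 - T / 2) = 0 := by
        rw [hT]
        fin_cases i <;> fin_cases m <;>
          simp only [Fin.isValue, Fin.mk_one, Fin.zero_eta,
            show (⟨2, by omega⟩ : Fin 3) = 2 from rfl] at hmi ⊢ <;>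
          first
          | exact absurd rfl hmi
          | linear_combination ((α 0 + α 1 - α 2) / 2) * hS
          | linear_combination ((α 0 + α 2 - α 1) / 2) * hS
          | linear_combination ((α 1 + α 2 - α 0) / 2) * hS
      rw [hβ, zero_smul]
    · intro h; exact absurd (Finset.mem_univ i) h
  have hW1 : C.mulVec (s⁻¹ • P.mulVec X) = α i • (s⁻¹ • P.mulVec X) := by
    rw [key, Matrix.mulVec_smul, Matrix.mulVec_smul, hCW i]
    module
  refine ⟨hW1, Or.inr ?_⟩
  have hWiWi : W i ⬝ᵥ W i = 1 := by simpa using horth i i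
  have hPXX : P.mulVec X ⬝ᵥ X = (3 * α i ^ 2 - T / 2) * c ^ 2 := by
    rw [key, smul_dotProduct, ← hc, smul_eq_mul]
    ring
  rw [key]
  rw [smul_dotProduct, dotProduct_smul, smul_dotProduct,
    dotProduct_smul, hWiWi]
  rw [hPXX] at hs
  simp only [smul_eq_mul, mul_one]
  field_simp
  linear_combination (4 : ℂ) * hs
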